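/- arXiv:2605.08892 — 6 statements merged into one kernel-verified Lean document; each statement's English description precedes it below -/
import Mathlib

section
/- Let R ⊆ ℕ^n be a finite set satisfying the monomial condition. Then S_R = L_R · L_Rᵀ, i.e., for all k, k' ∈ R one has C(k + k', k) = ∑_{j ∈ R} C(k,j) · C(k',j). -/
/-!
Vandermonde's identity `∑ᵢ C(a,i) C(b,i) = C(a+b,a)` holds coordinatewise, and multiplying it
over the coordinates turns the product over `j` of sums over `i_j ≤ k_j` into one sum over the box
`{i | i ≤ k}`. The box lies in `R` because `R` is downward closed, and every other `i ∈ R`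
contributes `C(k,i) = 0`.
-/

open Finset

theorem Nat.sum_Iic_choose_mul_choose (a b : ℕ) :
    ∑ i ∈ Iic a, a.choose i * b.choose i = (a + b).choose a := by
  rw [Nat.add_choose_eq, Nat.sum_antidiagonal_eq_sum_range_succ (fun i j => a.choose i * b.choose j),
    ← Nat.range_succ_eq_Iic, ← sum_range_reflect]
  refine sum_congr rfl fun i hi => ?_
  rw [mem_range] at hi
  rw [show a + 1 - 1 - i = a - i by omega, Nat.choose_symm (by omega)]

variable {ι : Type*} [Fintype ι] [DecidableEq ι]

theorem prod_add_choose_eq_sum_Iic (k k' : ι → ℕ) :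
    ∏ j, (k j + k' j).choose (k j) =
      ∑ i ∈ Iic k, (∏ j, (k j).choose (i j)) * ∏ j, (k' j).choose (i j) := by
  simp_rw [← prod_mul_distrib, ← Nat.sum_Iic_choose_mul_choose]
  exact prod_univ_sum (fun j => Iic (k j)) fun j x => (k j).choose x * (k' j).choose x

theorem prod_add_choose_eq_sum_of_Iic_subset {R : Finset (ι → ℕ)} {k : ι → ℕ} (k' : ι → ℕ)
    (hR : Iic k ⊆ R) :
    ∏ j, (k j + k' j).choose (k j) =
      ∑ i ∈ R, (∏ j, (k j).choose (i j)) * ∏ j, (k' j).choose (i j) := by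
  rw [prod_add_choose_eq_sum_Iic]
  refine sum_subset hR fun i _ hik => ?_
  obtain ⟨j, hj⟩ : ∃ j, k j < i j := by simpa [Pi.le_def] using hik
  rw [prod_eq_zero (mem_univ j) (Nat.choose_eq_zero_of_lt hj), zero_mul]

/-- If the finite set `R ⊆ ℕ^n` satisfies the monomial condition (downward closed),
then `S_R = L_R · L_Rᵀ`. -/
theorem stmt6 (n : ℕ) (R : Finset (Fin n → ℕ))
    (hR : ∀ k ∈ R, ∀ i : Fin n → ℕ, (∀ j, i j ≤ k j) → i ∈ R) :
    (Matrix.of fun k k' : R => ((∏ j, (k.1 j + k'.1 j).choose (k.1 j) : ℕ) : ℤ)) =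
      (Matrix.of fun k k' : R => ((∏ j, (k.1 j).choose (k'.1 j) : ℕ) : ℤ)) *
        (Matrix.of fun k k' : R => ((∏ j, (k.1 j).choose (k'.1 j) : ℕ) : ℤ)).transpose := by
  ext k k'
  have hbox : Iic k.1 ⊆ R := fun i hi => hR k k.2 i (Pi.le_def.mp (mem_Iic.mp hi))
  rw [Matrix.mul_apply, Matrix.of_apply, prod_add_choose_eq_sum_of_Iic_subset k'.1 hbox,
    ← sum_coe_sort R]
  push_cast
  rfl
end

section
/- Let R ⊆ ℕ^n be a finite set satisfying the monomial condition. Then the determinant of the symmetric Pascal matrix S_R, indexed by R × R with (k,k')-entry C(k + k', k), equals 1. -/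
/-!
Let `L` be the `R × R` matrix with entries `C(k, i)`. Coordinatewise Vandermonde,
`C(a + b, a) = ∑_c C(a, c) C(b, c)`, gives `C(k + k', k) = ∑_{i ≤ k'} C(k, i) C(k', i)`, and
because `R` is downward closed every `i ≤ k'` lies in `R`; hence `S_R = L Lᵀ`. Since
`C(k, i) = 0` unless `i ≤ k`, the matrix `L` is unitriangular for any linear extension of the
coordinatewise order, so `det S_R = (det L)^2 = 1`.
-/

open Finset Matrix

theorem Matrix.det_eq_prod_diag_of_apply_eq_zero_of_not_le {ι R : Type*} [Fintype ι]
    [DecidableEq ι] [PartialOrder ι] [CommRing R] (M : Matrix ι ι R)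
    (h : ∀ i j, ¬j ≤ i → M i j = 0) : M.det = ∏ i, M i i := by
  let : Fintype (LinearExtension ι) := ‹Fintype ι›
  let : DecidableEq (LinearExtension ι) := ‹DecidableEq ι›
  refine det_of_isLowerTriangular (m := LinearExtension ι) M fun i j hij => h i j fun hji => ?_
  exact (toLinearExtension.monotone hji).not_gt hij

theorem Nat.add_choose_eq_sum_choose_mul_choose (a b : ℕ) :
    (a + b).choose a = ∑ c ∈ Iic b, a.choose c * b.choose c := by
  rw [choose_symm_add, add_choose_eq, ← range_succ_eq_Iic,
    Nat.sum_antidiagonal_eq_sum_range_succ_mk]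
  exact sum_congr rfl fun c hc => by rw [choose_symm (mem_range_succ_iff.mp hc)]

section

variable {σ : Type*} [Fintype σ]

theorem prod_choose_eq_zero_of_not_le {k i : σ → ℕ} (h : ¬i ≤ k) :
    ∏ j, (k j).choose (i j) = 0 := by
  obtain ⟨j, hj⟩ : ∃ j, ¬i j ≤ k j := by simpa [Pi.le_def] using h
  exact prod_eq_zero (mem_univ j) (Nat.choose_eq_zero_of_lt (not_le.mp hj))

theorem prod_add_choose_eq_sum [DecidableEq σ] (k k' : σ → ℕ) {s : Finset (σ → ℕ)}
    (hs : ∀ i ≤ k', i ∈ s) :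
    ∏ j, (k j + k' j).choose (k j) =
      ∑ i ∈ s, (∏ j, (k j).choose (i j)) * ∏ j, (k' j).choose (i j) := by
  calc ∏ j, (k j + k' j).choose (k j)
      = ∏ j, ∑ c ∈ Iic (k' j), (k j).choose c * (k' j).choose c := by
        simp only [Nat.add_choose_eq_sum_choose_mul_choose]
    _ = ∑ i ∈ Iic k', ∏ j, (k j).choose (i j) * (k' j).choose (i j) := prod_univ_sum _ _
    _ = ∑ i ∈ s, (∏ j, (k j).choose (i j)) * ∏ j, (k' j).choose (i j) := by
        simp only [prod_mul_distrib]
        refine sum_subset (fun i hi => hs i (mem_Iic.mp hi)) fun i _ hi => ?_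
        rw [prod_choose_eq_zero_of_not_le (mt mem_Iic.mpr hi), mul_zero]

variable (R : Finset (σ → ℕ))

def binomialMatrix : Matrix R R ℤ :=
  of fun k i => ((∏ j, (k.1 j).choose (i.1 j) : ℕ) : ℤ)

theorem det_binomialMatrix : (binomialMatrix R).det = 1 := by
  rw [det_eq_prod_diag_of_apply_eq_zero_of_not_le _ fun k i hik => ?_]
  · refine prod_eq_one fun k _ => ?_
    simp [binomialMatrix]
  · rw [binomialMatrix, of_apply, prod_choose_eq_zero_of_not_le (Subtype.coe_le_coe.not.mpr hik),
      Nat.cast_zero]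

theorem of_prod_add_choose_eq_binomialMatrix_mul_transpose [DecidableEq σ]
    (hR : ∀ k ∈ R, ∀ i ≤ k, i ∈ R) :
    (of fun k k' : R => ((∏ j, (k.1 j + k'.1 j).choose (k.1 j) : ℕ) : ℤ)) =
      binomialMatrix R * (binomialMatrix R)ᵀ := by
  ext k k'
  simp only [of_apply, mul_apply, transpose_apply, binomialMatrix]
  rw [prod_add_choose_eq_sum k.1 k'.1 (hR k'.1 k'.2), ← sum_coe_sort R]
  push_cast
  rfl

end

/-- If the finite set `R ⊆ ℕ^n` satisfies the monomial condition (downward closed),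
then the determinant of the symmetric Pascal matrix `S_R = (C(k+k',k))_{k,k' ∈ R}` is `1`. -/
theorem stmt7 (n : ℕ) (R : Finset (Fin n → ℕ))
    (hR : ∀ k ∈ R, ∀ i : Fin n → ℕ, (∀ j, i j ≤ k j) → i ∈ R) :
    (Matrix.of fun k k' : R => ((∏ j, (k.1 j + k'.1 j).choose (k.1 j) : ℕ) : ℤ)).det = 1 := by
  rw [of_prod_add_choose_eq_binomialMatrix_mul_transpose R hR, det_mul, det_transpose,
    det_binomialMatrix, one_mul]
end

section
/- Let R ⊆ ℕ^n be a finite set satisfying the monomial condition and let p ∈ ℕ. Then for every k ∈ R, the polynomial identity ∑_{k' ∈ R} ((L_R)^p)_{k,k'} · x_1^{k'_1}⋯x_n^{k'_n} = ∏_{j=1}^n (p + x_j)^{k_j} holds in ℤ[x_1,…,x_n], where (L_R)^p denotes the p-th matrix power of L_R. -/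
/-!
The row of `L_R` indexed by `k` lists the coefficients of `∏ j, (1 + x_j) ^ k_j` in the
monomial basis: by the binomial theorem these are the `C(k, k')` with `k' ≤ k`, and all such
`k'` lie in `R` because `R` is a lower set. So `L_R` is the matrix of the substitution
`x_j ↦ 1 + x_j` on the monomials indexed by `R`, and `L_R ^ p` is that of its `p`-th iterate
`x_j ↦ p + x_j`.
-/

open MvPolynomial Finset

theorem Matrix.sum_pow_apply_smul_eq_iterate {ι S A : Type*} [Fintype ι] [DecidableEq ι]
    [Semiring S] [AddCommMonoid A] [Module S A] (M : Matrix ι ι S) (T : A →ₗ[S] A) (f : ι → A)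
    (hT : ∀ i, T (f i) = ∑ j, M i j • f j) (p : ℕ) (i : ι) :
    ∑ j, (M ^ p) i j • f j = T^[p] (f i) := by
  induction p with
  | zero => simp [Matrix.one_apply]
  | succ p ih =>
    calc ∑ j, (M ^ (p + 1)) i j • f j
        = ∑ c, (M ^ p) i c • ∑ j, M c j • f j := by
          simp only [pow_succ, Matrix.mul_apply, sum_smul, smul_sum, mul_smul]
          exact sum_comm
      _ = T^[p + 1] (f i) := by
          simp only [← hT, ← map_smul, ← map_sum, ih, Function.iterate_succ_apply']

theorem aeval_one_add_X_iterate {σ S : Type*} [CommSemiring S] (p : ℕ) (P : MvPolynomial σ S) :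
    (aeval fun j => 1 + X j)^[p] P = aeval (fun j => C (p : S) + X j) P := by
  induction p with
  | zero => simp
  | succ p ih =>
    rw [Function.iterate_succ_apply', ih, ← AlgHom.comp_apply, comp_aeval]
    congr 2
    funext j
    simp only [map_add, aeval_C, aeval_X, algebraMap_eq, Nat.cast_succ, map_one]
    ring

section

variable {σ S : Type*} [Fintype σ] [DecidableEq σ] [CommSemiring S]

theorem prod_one_add_X_pow_eq_sum_Iic (k : σ → ℕ) :
    ∏ j, (1 + X j : MvPolynomial σ S) ^ k j =
      ∑ i ∈ Iic k, C ((∏ j, (k j).choose (i j) : ℕ) : S) * ∏ j, X j ^ i j := by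
  have hbox : Iic k = Fintype.piFinset fun j => range (k j + 1) := by
    simp only [Nat.range_succ_eq_Iic]; rfl
  calc ∏ j, (1 + X j : MvPolynomial σ S) ^ k j
      = ∏ j, ∑ m ∈ range (k j + 1), C ((k j).choose m : S) * X j ^ m := by
        refine prod_congr rfl fun j _ => ?_
        rw [add_comm, add_pow]
        refine sum_congr rfl fun m _ => ?_
        rw [one_pow, mul_one, mul_comm, map_natCast]
    _ = _ := by
        rw [prod_univ_sum, hbox]
        refine sum_congr rfl fun i _ => ?_
        rw [prod_mul_distrib, Nat.cast_prod, map_prod]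

theorem IsLowerSet.sum_choose_mul_X_pow_eq_prod_one_add_X_pow {R : Finset (σ → ℕ)}
    (hR : IsLowerSet (R : Set (σ → ℕ))) {k : σ → ℕ} (hk : k ∈ R) :
    ∑ i ∈ R, C ((∏ j, (k j).choose (i j) : ℕ) : S) * ∏ j, X j ^ i j =
      ∏ j, (1 + X j : MvPolynomial σ S) ^ k j := by
  rw [prod_one_add_X_pow_eq_sum_Iic]
  refine (sum_subset (fun i hi => hR (mem_Iic.mp hi) hk) fun i _ hi => ?_).symm
  obtain ⟨j, hj⟩ : ∃ j, k j < i j := by simpa [Pi.le_def] using hi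
  rw [prod_eq_zero (mem_univ j) (Nat.choose_eq_zero_of_lt hj), Nat.cast_zero, map_zero, zero_mul]

end

/-- If the finite `R ⊆ ℕ^n` satisfies the monomial condition and `p ∈ ℕ`, then for every
`k ∈ R`, `∑_{k' ∈ R} ((L_R)^p)_{k,k'} x^{k'} = ∏ j (p + x_j)^{k_j}` in `ℤ[x_1,…,x_n]`. -/
theorem stmt10 (n : ℕ) (R : Finset (Fin n → ℕ))
    (hR : ∀ k ∈ R, ∀ i : Fin n → ℕ, (∀ j, i j ≤ k j) → i ∈ R) (p : ℕ) (k : R) :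
    ∑ k' : R,
        MvPolynomial.C
          (((Matrix.of fun a b : R => ((∏ j, (a.1 j).choose (b.1 j) : ℕ) : ℤ)) ^ p) k k') *
          ∏ j, MvPolynomial.X j ^ k'.1 j =
      (∏ j, (MvPolynomial.C (p : ℤ) + MvPolynomial.X j) ^ k.1 j :
        MvPolynomial (Fin n) ℤ) := by
  set L := Matrix.of fun a b : R => ((∏ j, (a.1 j).choose (b.1 j) : ℕ) : ℤ)
  have hrow (c : R) : (aeval fun j => 1 + X j : MvPolynomial (Fin n) ℤ →ₐ[ℤ] _).toLinearMap
      (∏ j, X j ^ c.1 j) = ∑ k' : R, L c k' • (∏ j, X j ^ k'.1 j : MvPolynomial (Fin n) ℤ) := by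
    simp only [L, Matrix.of_apply, MvPolynomial.smul_eq_C_mul]
    rw [sum_coe_sort R fun i => C ((∏ j, (c.1 j).choose (i j) : ℕ) : ℤ) * ∏ j, X j ^ i j,
      IsLowerSet.sum_choose_mul_X_pow_eq_prod_one_add_X_pow (fun a b hba ha => hR a ha b hba) c.2]
    simp only [AlgHom.coe_toLinearMap, map_prod, map_pow, aeval_X]
  simp_rw [← MvPolynomial.smul_eq_C_mul]
  rw [Matrix.sum_pow_apply_smul_eq_iterate L _ _ hrow, AlgHom.coe_toLinearMap,
    aeval_one_add_X_iterate]
  simp only [map_prod, map_pow, aeval_X]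
end

section
/- Let R ⊆ ℕ^n be a finite set satisfying the monomial condition and let p ∈ ℕ. Then for all k, k' ∈ R, the (k,k')-entry of the matrix power (L_R)^p equals p^{|k| - |k'|} · C(k,k') if k' ≤ k, and equals 0 otherwise. -/
/-!
`L_R` is the matrix of the translation `f(t) ↦ f(t + 1)` in the monomial basis `t^k, k ∈ R`:
`(t + 1)^k = ∑_{k' ≤ k} C(k, k') t^{k'}`, and downward closedness of `R` makes the span of these
monomials invariant. Translations by `x` and by `y` compose to translation by `x + y`, so `L_R^p` is
translation by `p`, whose matrix has entries `∏_j p^{k_j - k'_j} C(k_j, k'_j)`.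
-/

open Finset

section ShiftCoeff

variable {S : Type*} [CommSemiring S]

-- The coefficient of `t ^ b` in `(t + x) ^ a`.
def shiftCoeff (x : S) (a b : ℕ) : S := x ^ (a - b) * a.choose b

lemma shiftCoeff_of_lt (x : S) {a b : ℕ} (h : a < b) : shiftCoeff x a b = 0 := by
  simp [shiftCoeff, Nat.choose_eq_zero_of_lt h]

lemma shiftCoeff_zero (a b : ℕ) : shiftCoeff (0 : S) a b = if a = b then 1 else 0 := by
  rcases lt_trichotomy a b with h | rfl | h
  · simp [shiftCoeff_of_lt _ h, h.ne]
  · simp [shiftCoeff]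
  · simp [shiftCoeff, h.ne', Nat.sub_ne_zero_of_lt h]

lemma shiftCoeff_one (a b : ℕ) : shiftCoeff (1 : S) a b = a.choose b := by
  simp [shiftCoeff]

lemma sum_Iic_shiftCoeff_mul_shiftCoeff (x y : S) (a b : ℕ) :
    ∑ m ∈ Iic a, shiftCoeff x a m * shiftCoeff y m b = shiftCoeff (x + y) a b := by
  rcases lt_or_ge a b with hab | hba
  · rw [shiftCoeff_of_lt _ hab]
    refine sum_eq_zero fun m hm => ?_
    rw [shiftCoeff_of_lt y ((mem_Iic.1 hm).trans_lt hab), mul_zero]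
  obtain ⟨c, rfl⟩ := Nat.exists_eq_add_of_le hba
  have hlow : ∑ m ∈ range b, shiftCoeff x (b + c) m * shiftCoeff y m b = 0 :=
    sum_eq_zero fun m hm => by rw [shiftCoeff_of_lt y (mem_range.1 hm), mul_zero]
  rw [← Nat.range_succ_eq_Iic, add_assoc, sum_range_add, hlow, zero_add, shiftCoeff,
    Nat.add_sub_cancel_left, add_comm x, add_pow, sum_mul]
  refine sum_congr rfl fun t _ => ?_
  have hchoose := Nat.choose_mul (n := b + c) (Nat.le_add_right b t)
  simp only [Nat.add_sub_cancel_left] at hchoose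
  simp only [shiftCoeff, Nat.add_sub_cancel_left, Nat.add_sub_add_left]
  calc _ = x ^ (c - t) * y ^ t * (((b + c).choose (b + t) * (b + t).choose b : ℕ) : S) := by
        push_cast; ring
    _ = _ := by rw [hchoose]; push_cast; ring

end ShiftCoeff

section ShiftMatrix

variable {ι S : Type*} [Fintype ι] [CommSemiring S]

lemma prod_shiftCoeff_eq_zero_of_not_le (x : S) {a b : ι → ℕ} (h : ¬b ≤ a) :
    ∏ j, shiftCoeff x (a j) (b j) = 0 := by
  simp only [Pi.le_def, not_forall, not_le] at h
  obtain ⟨j, hj⟩ := h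
  exact prod_eq_zero (mem_univ j) (shiftCoeff_of_lt x hj)

lemma prod_shiftCoeff_of_le (x : S) {a b : ι → ℕ} (h : b ≤ a) :
    ∏ j, shiftCoeff x (a j) (b j) = x ^ (∑ j, a j - ∑ j, b j) * ∏ j, ((a j).choose (b j) : S) := by
  rw [← sum_tsub_distrib _ fun j _ => h j, ← prod_pow_eq_pow_sum, ← prod_mul_distrib]
  rfl

def shiftMatrix (R : Finset (ι → ℕ)) (x : S) : Matrix R R S :=
  Matrix.of fun a b => ∏ j, shiftCoeff x (a.1 j) (b.1 j)

lemma shiftMatrix_zero (R : Finset (ι → ℕ)) : shiftMatrix R (0 : S) = 1 := by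
  ext a b
  simp only [shiftMatrix, Matrix.of_apply, shiftCoeff_zero, prod_boole, Matrix.one_apply,
    mem_univ, forall_const, Subtype.ext_iff, funext_iff]

lemma shiftMatrix_mul {R : Finset (ι → ℕ)} (hR : IsLowerSet (R : Set (ι → ℕ))) (x y : S) :
    shiftMatrix R x * shiftMatrix R y = shiftMatrix R (x + y) := by
  classical
  ext a b
  have hIic : Iic a.1 ⊆ R := fun m hm => hR (mem_Iic.1 hm) a.2
  calc (shiftMatrix R x * shiftMatrix R y) a b
      = ∑ m ∈ R, (∏ j, shiftCoeff x (a.1 j) (m j)) * ∏ j, shiftCoeff y (m j) (b.1 j) :=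
        sum_coe_sort R fun m => (∏ j, shiftCoeff x (a.1 j) (m j)) * ∏ j, shiftCoeff y (m j) (b.1 j)
    _ = ∑ m ∈ Iic a.1, (∏ j, shiftCoeff x (a.1 j) (m j)) * ∏ j, shiftCoeff y (m j) (b.1 j) := by
        refine (sum_subset hIic fun m _ hm => ?_).symm
        rw [prod_shiftCoeff_eq_zero_of_not_le x (mt mem_Iic.2 hm), zero_mul]
    _ = ∏ j, ∑ m ∈ Iic (a.1 j), shiftCoeff x (a.1 j) m * shiftCoeff y m (b.1 j) := by
        simp_rw [prod_univ_sum, ← prod_mul_distrib]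
        rfl
    _ = shiftMatrix R (x + y) a b := by
        simp only [sum_Iic_shiftCoeff_mul_shiftCoeff, shiftMatrix, Matrix.of_apply]

lemma shiftMatrix_pow {R : Finset (ι → ℕ)} (hR : IsLowerSet (R : Set (ι → ℕ))) (x : S) (p : ℕ) :
    shiftMatrix R x ^ p = shiftMatrix R (p * x) := by
  induction p with
  | zero => simp [shiftMatrix_zero]
  | succ p ih => rw [pow_succ, ih, shiftMatrix_mul hR, Nat.cast_succ, add_one_mul]

end ShiftMatrix

/-- If the finite `R ⊆ ℕ^n` satisfies the monomial condition and `p ∈ ℕ`, then the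
`(k,k')`-entry of `(L_R)^p` is `p^{|k|-|k'|} C(k,k')` if `k' ≤ k` and `0` otherwise. -/
theorem stmt11 (n : ℕ) (R : Finset (Fin n → ℕ))
    (hR : ∀ k ∈ R, ∀ i : Fin n → ℕ, (∀ j, i j ≤ k j) → i ∈ R) (p : ℕ) (k k' : R) :
    ((Matrix.of fun a b : R => ((∏ j, (a.1 j).choose (b.1 j) : ℕ) : ℤ)) ^ p) k k' =
      if ∀ j, k'.1 j ≤ k.1 j then
        (p : ℤ) ^ (∑ j, k.1 j - ∑ j, k'.1 j) * ((∏ j, (k.1 j).choose (k'.1 j) : ℕ) : ℤ)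
      else 0 := by
  have hL : (Matrix.of fun a b : R => ((∏ j, (a.1 j).choose (b.1 j) : ℕ) : ℤ)) = shiftMatrix R 1 := by
    ext a b
    simp [shiftMatrix, shiftCoeff_one]
  rw [hL, shiftMatrix_pow (fun a b hba ha => hR a ha b hba), mul_one, shiftMatrix, Matrix.of_apply]
  split_ifs with h
  · rw [prod_shiftCoeff_of_le _ h, Nat.cast_prod]
  · exact prod_shiftCoeff_eq_zero_of_not_le _ h
end

section
/- Let R ⊆ ℕ^n be a finite set satisfying the monomial condition. Define the real matrix A_R indexed by R × R by (A_R)_{k,k'} = C(k,k') if |k| = |k'| + 1 and (A_R)_{k,k'} = 0 otherwise. Then for every p ∈ ℕ, the real Pascal matrix L_R satisfies (L_R)^p = exp(p · A_R), where exp denotes the matrix exponential. -/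
/-!
`A_R` is nilpotent and `A_R ^ m = m! • P_m`, where `P_m` keeps those entries `C(k, k')` of `L_R`
with `|k| = |k'| + m`. The induction step is the identity
`∑_{v ∈ R, |v| = |b| + 1} C(a, v) C(v, b) = (|a| - |b|) C(a, b)` for `a ∈ R`: the only `v` that
contribute are the `b + e_i` with `b + e_i ≤ a`, which lie in `R` by the monomial condition, and
`C(a, b + e_i) (b_i + 1) = C(a, b) (a_i - b_i)`. Hence `exp A_R = ∑_m P_m = L_R`, and
`L_R ^ p = (exp A_R) ^ p = exp (p • A_R)`.
-/

open Finset
open scoped Nat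

section PiChoose

variable {ι : Type*} [Fintype ι]

def piChoose (a b : ι → ℕ) : ℕ := ∏ j, (a j).choose (b j)

theorem piChoose_eq_zero_iff {a b : ι → ℕ} : piChoose a b = 0 ↔ ¬ b ≤ a := by
  simp [piChoose, prod_eq_zero_iff, Nat.choose_eq_zero_iff, Pi.le_def]

theorem piChoose_self (a : ι → ℕ) : piChoose a a = 1 :=
  prod_eq_one fun j _ => Nat.choose_self (a j)

variable [DecidableEq ι]

theorem piChoose_add_single_self (b : ι → ℕ) (i : ι) :
    piChoose (b + Pi.single i 1) b = b i + 1 := by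
  rw [piChoose, prod_eq_single i (fun j _ hj => by simp [hj]) (by simp)]
  simp

theorem piChoose_add_single_mul (a b : ι → ℕ) (i : ι) :
    piChoose a (b + Pi.single i 1) * (b i + 1) = piChoose a b * (a i - b i) := by
  simp only [piChoose, ← mul_prod_erase univ _ (mem_univ i)]
  rw [prod_congr rfl fun j hj => by rw [Pi.add_apply, Pi.single_eq_of_ne (ne_of_mem_erase hj),
    add_zero]]
  simp only [Pi.add_apply, Pi.single_eq_same]
  rw [mul_right_comm, Nat.choose_succ_right_eq, mul_right_comm]

theorem exists_eq_single_of_sum_eq_one {d : ι → ℕ} (h : ∑ j, d j = 1) :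
    ∃ i, d = Pi.single i 1 := by
  obtain ⟨i, hi⟩ := (Finsupp.sum_eq_one_iff (Finsupp.equivFunOnFinite.symm d)).1
    (by rwa [Finsupp.sum_fintype _ _ fun _ => rfl])
  exact ⟨i, by simpa using congrArg Finsupp.equivFunOnFinite hi⟩

theorem exists_eq_add_single_of_le {b v : ι → ℕ} (hle : b ≤ v)
    (hsum : ∑ j, v j = ∑ j, b j + 1) : ∃ i, v = b + Pi.single i 1 := by
  obtain ⟨i, hi⟩ := exists_eq_single_of_sum_eq_one (d := v - b) (by
    rw [show ∑ j, (v - b) j = ∑ j, v j - ∑ j, b j from sum_tsub_distrib _ fun j _ => hle j]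
    omega)
  exact ⟨i, by rw [← hi, add_tsub_cancel_of_le hle]⟩

theorem sum_piChoose_mul_piChoose_of_sum_eq_succ {R : Finset (ι → ℕ)}
    (hR : IsLowerSet (R : Set (ι → ℕ))) {a : ι → ℕ} (ha : a ∈ R) (b : ι → ℕ) :
    ∑ v ∈ R, (if ∑ j, v j = ∑ j, b j + 1 then piChoose a v * piChoose v b else 0) =
      piChoose a b * ∑ j, (a j - b j) := by
  set f : (ι → ℕ) → ℕ := fun v =>
    if ∑ j, v j = ∑ j, b j + 1 then piChoose a v * piChoose v b else 0
  have hf_ne_zero {v} (hv : f v ≠ 0) : ∑ j, v j = ∑ j, b j + 1 ∧ v ≤ a ∧ b ≤ v := by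
    simpa only [f, ne_eq, ite_eq_right_iff, mul_eq_zero, Classical.not_imp, not_or,
      piChoose_eq_zero_iff, not_not] using hv
  have hR_supp : Function.support f ⊆ R := fun v hv => hR (hf_ne_zero hv).2.1 ha
  have hsucc_supp : Function.support f ⊆ univ.image fun i => b + Pi.single i 1 := fun v hv => by
    obtain ⟨hsum, -, hbv⟩ := hf_ne_zero hv
    obtain ⟨i, rfl⟩ := exists_eq_add_single_of_le hbv hsum
    simp
  have hinj : Set.InjOn (fun i => b + Pi.single i 1) (univ : Finset ι) := fun i _ i' _ h => by
    simpa [Pi.single_apply, eq_comm] using congrFun (add_left_cancel h) i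
  calc ∑ v ∈ R, f v = ∑ᶠ v, f v := (finsum_eq_sum_of_support_subset f hR_supp).symm
    _ = ∑ v ∈ univ.image fun i => b + Pi.single i 1, f v :=
      finsum_eq_sum_of_support_subset f hsucc_supp
    _ = ∑ i, piChoose a b * (a i - b i) := by
      rw [sum_image hinj]
      refine sum_congr rfl fun i _ => ?_
      simp [f, sum_add_distrib, piChoose_add_single_self, piChoose_add_single_mul]
    _ = piChoose a b * ∑ j, (a j - b j) := (mul_sum ..).symm

end PiChoose

section PascalMatrix

variable {ι : Type*} [Fintype ι] (S : Type*) (R : Finset (ι → ℕ))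

def pascalMatrix [Semiring S] : Matrix R R S :=
  Matrix.of fun k k' => (piChoose k.1 k'.1 : S)

-- `pascalLayer S R m` is `P_m`; thus `A_R = pascalLayer ℝ R 1` and `L_R = pascalMatrix ℝ R`.
def pascalLayer [Semiring S] (m : ℕ) : Matrix R R S :=
  Matrix.of fun k k' => if ∑ j, k.1 j = ∑ j, k'.1 j + m then (piChoose k.1 k'.1 : S) else 0

variable {R}

theorem pascalLayer_zero [DecidableEq ι] [Semiring S] : pascalLayer S R 0 = 1 := by
  ext k k'
  rw [pascalLayer, Matrix.of_apply, Matrix.one_apply, add_zero]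
  by_cases hk : k = k'
  · simp [hk, piChoose_self]
  · rw [if_neg hk, ite_eq_right_iff]
    refine fun hsum => ?_
    rw [piChoose_eq_zero_iff.2 fun hle => hk (Subtype.ext (funext fun j => ?_)), Nat.cast_zero]
    exact ((sum_eq_sum_iff_of_le fun j _ => hle j).1 hsum.symm j (mem_univ j)).symm

theorem pascalLayer_mul_pascalLayer_one [DecidableEq ι] [Semiring S]
    (hR : IsLowerSet (R : Set (ι → ℕ))) (m : ℕ) :
    pascalLayer S R m * pascalLayer S R 1 = (m + 1) • pascalLayer S R (m + 1) := by
  ext k k'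
  simp only [Matrix.mul_apply, pascalLayer, Matrix.of_apply, Matrix.smul_apply]
  by_cases h : ∑ j, k.1 j = ∑ j, k'.1 j + (m + 1)
  · have hterm (v : R) :
        ((if ∑ j, k.1 j = ∑ j, v.1 j + m then (piChoose k.1 v.1 : S) else 0) *
          if ∑ j, v.1 j = ∑ j, k'.1 j + 1 then (piChoose v.1 k'.1 : S) else 0) =
        ((if ∑ j, v.1 j = ∑ j, k'.1 j + 1 then piChoose k.1 v.1 * piChoose v.1 k'.1 else 0 : ℕ)
          : S) := by
      split_ifs <;> first | omega | simp
    rw [sum_congr rfl fun v _ => hterm v, ← Nat.cast_sum,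
      sum_coe_sort R fun v => if ∑ j, v j = ∑ j, k'.1 j + 1 then
        piChoose k.1 v * piChoose v k'.1 else 0,
      sum_piChoose_mul_piChoose_of_sum_eq_succ hR k.2, if_pos h, nsmul_eq_mul, mul_comm]
    norm_cast
    by_cases hle : k'.1 ≤ k.1
    · rw [sum_tsub_distrib _ fun j _ => hle j, h, Nat.add_sub_cancel_left]
    · simp [piChoose_eq_zero_iff.2 hle]
  · rw [if_neg h, smul_zero]
    refine sum_eq_zero fun v _ => ?_
    split_ifs <;> first | omega | simp

theorem pascalLayer_one_pow [DecidableEq ι] [Semiring S] (hR : IsLowerSet (R : Set (ι → ℕ)))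
    (m : ℕ) :
    pascalLayer S R 1 ^ m = m ! • pascalLayer S R m := by
  induction m with
  | zero => simp [pascalLayer_zero]
  | succ m ih =>
    rw [pow_succ, ih, smul_mul_assoc, pascalLayer_mul_pascalLayer_one S hR, smul_smul,
      Nat.factorial_succ, mul_comm]

theorem pascalLayer_eq_zero [Semiring S] {m : ℕ} (hm : ∀ k ∈ R, ∑ j, k j < m) :
    pascalLayer S R m = 0 := by
  ext k k'
  have := hm k k.2
  simp only [pascalLayer, Matrix.of_apply, Matrix.zero_apply, ite_eq_right_iff]
  omega

theorem sum_range_pascalLayer [Semiring S] {N : ℕ} (hN : ∀ k ∈ R, ∑ j, k j < N) :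
    ∑ m ∈ range N, pascalLayer S R m = pascalMatrix S R := by
  ext k k'
  simp only [Matrix.sum_apply, pascalLayer, pascalMatrix, Matrix.of_apply]
  by_cases hle : k'.1 ≤ k.1
  · have hdeg : ∑ j, k'.1 j ≤ ∑ j, k.1 j := sum_le_sum fun j _ => hle j
    have hk := hN k k.2
    rw [sum_eq_single_of_mem (∑ j, k.1 j - ∑ j, k'.1 j) (mem_range.2 (by omega))
      fun m _ hm => if_neg (by omega), if_pos (by omega)]
  · simp [piChoose_eq_zero_iff.2 hle]

theorem exp_pascalLayer_one [DecidableEq ι] [Ring S] [Algebra ℚ S] [TopologicalSpace S]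
    [IsTopologicalRing S]
    (hR : IsLowerSet (R : Set (ι → ℕ))) :
    NormedSpace.exp (pascalLayer S R 1) = pascalMatrix S R := by
  obtain ⟨N, hN⟩ : ∃ N, ∀ k ∈ R, ∑ j, k j < N :=
    ⟨R.sup (fun k => ∑ j, k j) + 1, fun k hk =>
      Nat.lt_succ_of_le (le_sup (f := fun k => ∑ j, k j) hk)⟩
  rw [NormedSpace.exp_eq_tsum_rat]
  beta_reduce
  rw [tsum_eq_sum (s := range N), ← sum_range_pascalLayer S hN]
  · refine sum_congr rfl fun m _ => ?_
    rw [pascalLayer_one_pow S hR, ← Nat.cast_smul_eq_nsmul ℚ, smul_smul,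
      inv_mul_cancel₀ (by positivity), one_smul]
  · intro m hm
    rw [pascalLayer_one_pow S hR,
      pascalLayer_eq_zero S fun k hk => (hN k hk).trans_le (by simpa using hm), smul_zero,
      smul_zero]

end PascalMatrix

/-- If the finite `R ⊆ ℕ^n` satisfies the monomial condition, and `A_R` is the real
matrix with `(k,k')`-entry `C(k,k')` when `|k| = |k'| + 1` and `0` otherwise, then
`(L_R)^p = exp(p • A_R)` for every `p ∈ ℕ`. -/
theorem stmt14 (n : ℕ) (R : Finset (Fin n → ℕ))
    (hR : ∀ k ∈ R, ∀ i : Fin n → ℕ, (∀ j, i j ≤ k j) → i ∈ R) (p : ℕ) :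
    (Matrix.of fun k k' : R => ((∏ j, (k.1 j).choose (k'.1 j) : ℕ) : ℝ)) ^ p =
      NormedSpace.exp
        ((p : ℝ) •
          Matrix.of fun k k' : R =>
            if (∑ j, k.1 j) = (∑ j, k'.1 j) + 1 then
              ((∏ j, (k.1 j).choose (k'.1 j) : ℕ) : ℝ)
            else 0) := by
  rw [Nat.cast_smul_eq_nsmul ℝ p, Matrix.exp_nsmul]
  exact congrArg (· ^ p) (exp_pascalLayer_one ℝ fun a b hba ha => hR a ha b hba).symm
end

section
/- For every integer p ∈ ℤ and every k' ∈ ℕ^n, the formal power series F_p,k' ∈ ℤ[[x_1,…,x_n]] whose coefficient of x^k is p^{|k| - |k'|} · C(k,k') when k' ≤ k and 0 otherwise, satisfies F_{p,k'} · ∏_{j=1}^n (1 - p·x_j)^{k'_j + 1} = x^{k'}; equivalently, the generating function of the k'-th column of the p-th power of the infinite multivariate Pascal matrix L equals (1/∏_{j=1}^n(1 - p x_j)) · ∏_{j=1}^n (x_j/(1 - p x_j))^{k'_j}, which expresses that L^p is the multivariate Riordan array R(1/∏_j(1-p z_j), z_1/(1-p z_1),…, z_n/(1-p z_n)). -/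
/-!
The series factors over the variables: its coefficient at `x^d` is
`∏ j, C(d_j, k'_j) p^(d_j - k'_j)`, so it is the product of the univariate series
`x_j^(k'_j) / (1 - p x_j)^(k'_j + 1)` substituted into each variable. In one variable this is the
identity `∑ₘ C(k + m, k) x^m · (1 - x)^(k+1) = 1`, rescaled by `x ↦ p x` and shifted by `x^k`.
-/

namespace PowerSeries

variable {R : Type*} [CommRing R]

/-- The generating function `x^k / (1 - p x)^(k+1)` of column `k` of the `p`-th power of the
Pascal matrix; for `m < k` the coefficient vanishes through the binomial factor. -/
noncomputable def pascalColumn (p : R) (k : ℕ) : R⟦X⟧ :=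
  mk fun m => (m.choose k : R) * p ^ (m - k)

theorem pascalColumn_eq (p : R) (k : ℕ) :
    pascalColumn p k = X ^ k * rescale p (mk fun m => ((k + m).choose k : R)) := by
  ext m
  rw [pascalColumn, coeff_mk, coeff_X_pow_mul', coeff_rescale, coeff_mk]
  split_ifs with h
  · rw [Nat.add_sub_cancel' h, mul_comm]
  · rw [Nat.choose_eq_zero_of_lt (not_le.mp h), Nat.cast_zero, zero_mul]

theorem pascalColumn_mul_one_sub_pow (p : R) (k : ℕ) :
    pascalColumn p k * (1 - C p * X) ^ (k + 1) = X ^ k := by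
  have h := congrArg (rescale p) (mk_add_choose_mul_one_sub_pow_eq_one (S := R) (d := k))
  rw [map_mul, map_pow, map_sub, map_one, rescale_X] at h
  rw [pascalColumn_eq, mul_assoc, h, mul_one]

end PowerSeries

theorem Finset.prod_choose_mul_pow_tsub {σ R : Type*} [Fintype σ] [CommSemiring R]
    (p : R) (k d : σ → ℕ) :
    ∏ j, ((d j).choose (k j) : R) * p ^ (d j - k j) =
      if ∀ j, k j ≤ d j then p ^ (∑ j, d j - ∑ j, k j) * ((∏ j, (d j).choose (k j) : ℕ) : R)
      else 0 := by
  split_ifs with hkd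
  · rw [Finset.prod_mul_distrib, Finset.prod_pow_eq_pow_sum,
      ← Finset.sum_tsub_distrib _ fun j _ => hkd j, Nat.cast_prod, mul_comm]
  · obtain ⟨j, hj⟩ := not_forall.mp hkd
    refine Finset.prod_eq_zero (Finset.mem_univ j) ?_
    rw [Nat.choose_eq_zero_of_lt (not_le.mp hj), Nat.cast_zero, zero_mul]

namespace MvPowerSeries

variable {σ R : Type*} [Fintype σ] [CommRing R]

theorem coeff_prod_subst_X [DecidableEq σ] (f : σ → PowerSeries R) (d : σ →₀ ℕ) :
    coeff d (∏ j, (f j).subst (X j : MvPowerSeries σ R)) =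
      ∏ j, PowerSeries.coeff (d j) (f j) := by
  rw [coeff_prod]
  simp only [PowerSeries.coeff_subst_single]
  -- only the splitting of `d` into its coordinate monomials contributes
  rw [Finset.sum_eq_single (Finsupp.equivFunOnFinite.symm fun j => Finsupp.single j (d j))]
  · simp
  · intro l hl hne
    obtain ⟨j, hj⟩ : ∃ j, l j ≠ Finsupp.single j (l j j) := by
      by_contra! hl_single
      have hd : d = ∑ j, Finsupp.single j (l j j) := by
        rw [← (Finset.mem_finsuppAntidiag.mp hl).1]
        exact Finset.sum_congr rfl fun j _ => hl_single j
      refine hne (Finsupp.ext fun j => ?_)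
      rw [Finsupp.equivFunOnFinite_symm_apply_apply, hl_single j, hd]
      simp [Finsupp.single_apply]
    exact Finset.prod_eq_zero (Finset.mem_univ j) (if_neg hj)
  · intro h
    exact absurd (Finset.mem_finsuppAntidiag.mpr ⟨by simp [Finsupp.univ_sum_single], by simp⟩) h

noncomputable def pascalColumn (p : R) (k : σ → ℕ) : MvPowerSeries σ R :=
  ∏ j, (PowerSeries.pascalColumn p (k j)).subst (X j)

theorem coeff_pascalColumn [DecidableEq σ] (p : R) (k : σ → ℕ) (d : σ →₀ ℕ) :
    coeff d (pascalColumn p k) = ∏ j, ((d j).choose (k j) : R) * p ^ (d j - k j) := by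
  simp only [pascalColumn, coeff_prod_subst_X, PowerSeries.pascalColumn, PowerSeries.coeff_mk]

theorem pascalColumn_mul_prod_one_sub_pow (p : R) (k : σ → ℕ) :
    pascalColumn p k * ∏ j, (1 - C p * X j) ^ (k j + 1) =
      ∏ j, (X j : MvPowerSeries σ R) ^ k j := by
  let e (j : σ) := PowerSeries.substAlgHom (R := R) (PowerSeries.HasSubst.X (S := R) j)
  have he_subst (j : σ) (f : PowerSeries R) : f.subst (X j) = e j f :=
    congrFun (PowerSeries.coe_substAlgHom _).symm f
  have he_X (j : σ) : e j PowerSeries.X = X j := PowerSeries.substAlgHom_X _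
  have he_C (j : σ) : e j (PowerSeries.C p) = C p := by
    rw [← he_subst, PowerSeries.subst_C]
  calc pascalColumn p k * ∏ j, (1 - C p * X j) ^ (k j + 1)
      = ∏ j, e j (PowerSeries.pascalColumn p (k j) *
          (1 - PowerSeries.C p * PowerSeries.X) ^ (k j + 1)) := by
        rw [pascalColumn, ← Finset.prod_mul_distrib]
        simp only [he_subst, map_mul, map_pow, map_sub, map_one, he_X, he_C]
    _ = ∏ j, (X j : MvPowerSeries σ R) ^ k j := by
        simp only [PowerSeries.pascalColumn_mul_one_sub_pow, map_pow, he_X]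

end MvPowerSeries

/-- For `p ∈ ℤ` and `k' ∈ ℕ^n`, the generating function `F` of the `k'`-column of `L^p`
(coefficient `p^{|k|-|k'|} C(k,k')` at `x^k` for `k' ≤ k`, and `0` otherwise) satisfies
`F · ∏ j (1 - p x_j)^{k'_j+1} = x^{k'}`, i.e. `F = (1/∏(1-p x_j)) ∏ (x_j/(1-p x_j))^{k'_j}`,
expressing `L^p` as a multivariate Riordan array. -/
theorem stmt19 (n : ℕ) (p : ℤ) (k' : Fin n → ℕ) (F : MvPowerSeries (Fin n) ℤ)
    (hF : ∀ d : Fin n →₀ ℕ, MvPowerSeries.coeff (R := ℤ) d F =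
      if ∀ j, k' j ≤ d j then
        p ^ (∑ j, d j - ∑ j, k' j) * ((∏ j, (d j).choose (k' j) : ℕ) : ℤ)
      else 0) :
    F * ∏ j, (1 - MvPowerSeries.C (σ := Fin n) (R := ℤ) p * MvPowerSeries.X j) ^ (k' j + 1) =
      ∏ j, MvPowerSeries.X j ^ k' j := by
  have hF_eq : F = MvPowerSeries.pascalColumn p k' := by
    ext d
    rw [hF, MvPowerSeries.coeff_pascalColumn]
    -- `convert` reconciles the two `Decidable` instances of the `if`
    convert (Finset.prod_choose_mul_pow_tsub p k' d).symm
  rw [hF_eq, MvPowerSeries.pascalColumn_mul_prod_one_sub_pow]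
end
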